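/- (Kummer curve, direction λ∞) Let 0 < λ₀ < λ∞. Define F_0(λ₀,λ∞) = ((λ∞+λ₀)²/2)·log(λ∞+λ₀) + ((λ∞−λ₀)²/2)·log(λ∞−λ₀) − 2λ₀²·log(2λ₀) − (3/2)(λ∞²−λ₀²), F_1(λ₀,λ∞) = −(1/12)·log((λ∞²−λ₀²)/λ₀), and F_g(λ₀,λ∞) = (B_{2g}/(2g(2g−2)))·( (λ₀+λ∞)^{2−2g} + (λ₀−λ∞)^{2−2g} − (2λ₀)^{2−2g} ) for g ≥ 2. Then for every integer n ≥ 1, Σ_{k=1}^{n} (2/(2k)!) · ∂_{λ∞}^{2k} F_{n−k}(λ₀,λ∞) = log((λ∞+λ₀)(λ∞−λ₀)) if n = 1, and = 0 if n ≥ 2. (That is, the free energy of the Kummer spectral curve satisfies F(λ₀, λ∞+ℏ) − 2F(λ₀,λ∞) + F(λ₀, λ∞−ℏ) = log((λ∞+λ₀)(λ∞−λ₀)) order by order in ℏ.) -/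

import Mathlib

/-!
Write `L y = log (y + λ₀) + log (y - λ₀)`. Then `F_0'' = L`, `F_1 = -L / 12 + const`, and for
`g ≥ 2`, `F_g` is a constant plus a multiple of `L^(2g - 2)`, because `t ^ (2 - 2g)` is
`-1 / (2g - 3)!` times the `(2g - 2)`-nd derivative of `log t` (the sign of `λ₀ - λ∞` is lost in
an even power). Uniformly `∂^(2k) F_g = -(B_{2g} (2g - 1) / (2g)!) L^(2g + 2k - 2)`, so the
coefficient of `ℏ^(2n - 2)` is `-2 L^(2n - 2) / (2n)!` times `∑_{g<n} (2g - 1) C(2n, 2g) B_{2g}`.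
That sum is `∑_{j<2n} (j - 1) C(2n, j) B_j` (odd `j` contribute nothing), and writing
`j - 1 = (2n - 1) - (2n - j)` with `(2n - j) C(2n, j) = 2n C(2n - 1, j)`, the identity
`∑_{j<m} C(m, j) B_j = 0` (`m ≥ 2`) turns it into `-2n B_{2n-1}`: it is `-1` for `n = 1` and
vanishes for `n ≥ 2`.
-/

open Real Finset Filter Topology
open scoped Nat

theorem Finset.sum_range_two_mul {M : Type*} [AddCommMonoid M] (f : ℕ → M) (n : ℕ) :
    ∑ j ∈ range (2 * n), f j = ∑ i ∈ range n, (f (2 * i) + f (2 * i + 1)) := by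
  induction n with
  | zero => simp
  | succ n ih =>
    rw [Nat.mul_succ, sum_range_succ, sum_range_succ, sum_range_succ, ih, add_assoc]

theorem Finset.sum_Icc_one_eq_sum_range_sub {M : Type*} [AddCommMonoid M] (f : ℕ → M) (n : ℕ) :
    ∑ k ∈ Icc 1 n, f k = ∑ g ∈ range n, f (n - g) := by
  refine sum_nbij' (n - ·) (n - ·) ?_ ?_ ?_ ?_ fun k hk => ?_
  any_goals intro k hk; simp only [mem_Icc, mem_range] at hk ⊢; omega
  rw [Nat.sub_sub_self (mem_Icc.1 hk).2]

theorem sum_range_sub_one_mul_choose_mul_bernoulli {p : ℕ} (hp : 2 ≤ p) :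
    ∑ j ∈ range (p + 1), ((j : ℚ) - 1) * (p + 1).choose j * bernoulli j
      = -(p + 1) * bernoulli p := by
  have hsum : ∑ j ∈ range (p + 1), ((p + 1).choose j : ℚ) * bernoulli j = 0 := by
    rw [sum_bernoulli, if_neg (by omega)]
  have hweighted : ∑ j ∈ range (p + 1), (p + 1 - j : ℚ) * (p + 1).choose j * bernoulli j
      = (p + 1) * bernoulli p := by
    have hrow (j : ℕ) (hj : j ∈ range (p + 1)) :
        (p + 1 - j : ℚ) * (p + 1).choose j * bernoulli j
          = (p + 1) * ((p.choose j : ℚ) * bernoulli j) := by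
      have h := congrArg (Nat.cast : ℕ → ℚ) (Nat.choose_mul_succ_eq p j)
      push_cast [Nat.cast_sub (mem_range.1 hj).le] at h
      linear_combination (-bernoulli j) * h
    rw [sum_congr rfl hrow, ← mul_sum, sum_range_succ, sum_bernoulli, if_neg (by omega),
      Nat.choose_self]
    simp
  calc ∑ j ∈ range (p + 1), ((j : ℚ) - 1) * (p + 1).choose j * bernoulli j
      = p * ∑ j ∈ range (p + 1), ((p + 1).choose j : ℚ) * bernoulli j
          - ∑ j ∈ range (p + 1), (p + 1 - j : ℚ) * (p + 1).choose j * bernoulli j := by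
        rw [mul_sum, ← sum_sub_distrib]
        exact sum_congr rfl fun j _ => by ring
    _ = -(p + 1) * bernoulli p := by rw [hsum, hweighted]; ring

theorem sum_range_two_mul_sub_one_mul_choose_mul_bernoulli (n : ℕ) :
    ∑ g ∈ range n, (2 * g - 1 : ℚ) * (2 * n).choose (2 * g) * bernoulli (2 * g)
      = if n = 1 then -1 else 0 := by
  match n with
  | 0 => simp
  | 1 => simp
  | m + 2 =>
    have hodd (i : ℕ) : ((2 * i + 1 : ℕ) - 1 : ℚ) * (2 * (m + 2)).choose (2 * i + 1)
        * bernoulli (2 * i + 1) = 0 := by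
      rcases i.eq_zero_or_pos with rfl | hi
      · simp
      · rw [bernoulli_eq_zero_of_odd (odd_two_mul_add_one i) (by omega), mul_zero]
    have h := sum_range_sub_one_mul_choose_mul_bernoulli (p := 2 * m + 3) (by omega)
    rw [bernoulli_eq_zero_of_odd ⟨m + 1, by ring⟩ (by omega), mul_zero,
      show 2 * m + 3 + 1 = 2 * (m + 2) by ring, sum_range_two_mul] at h
    simp only [hodd, add_zero] at h
    push_cast at h
    simpa using h

theorem iteratedDeriv_succ_eq_of_eventually_hasDerivAt {𝕜 F : Type*}
    [NontriviallyNormedField 𝕜] [NormedAddCommGroup F] [NormedSpace 𝕜 F] {f f' : 𝕜 → F} {x : 𝕜}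
    (h : ∀ᶠ y in 𝓝 x, HasDerivAt f (f' y) y) (n : ℕ) :
    iteratedDeriv (n + 1) f x = iteratedDeriv n f' x := by
  rw [iteratedDeriv_succ']
  exact Filter.EventuallyEq.iteratedDeriv_eq n (h.mono fun y hy => hy.deriv)

theorem iteratedDeriv_iteratedDeriv {𝕜 F : Type*} [NontriviallyNormedField 𝕜]
    [NormedAddCommGroup F] [NormedSpace 𝕜 F] (f : 𝕜 → F) (m n : ℕ) :
    iteratedDeriv m (iteratedDeriv n f) = iteratedDeriv (m + n) f := by
  simp only [iteratedDeriv_eq_iterate, Function.iterate_add]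
  rfl

theorem Real.iteratedDeriv_succ_log (n : ℕ) (x : ℝ) :
    iteratedDeriv (n + 1) log x = (-1) ^ n * n ! * x ^ (-1 - n : ℤ) := by
  rw [iteratedDeriv_succ', deriv_log', iteratedDeriv_eq_iterate, iter_deriv_inv]

noncomputable def logPair (a y : ℝ) : ℝ := log (y + a) + log (y - a)

section

variable {a x : ℝ}

theorem eventually_add_ne_zero_and_sub_ne_zero (hadd : x + a ≠ 0) (hsub : x - a ≠ 0) :
    ∀ᶠ y in 𝓝 x, y + a ≠ 0 ∧ y - a ≠ 0 :=
  ((continuousAt_id.add continuousAt_const).eventually_ne hadd).and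
    ((continuousAt_id.sub continuousAt_const).eventually_ne hsub)

theorem iteratedDeriv_succ_logPair (hadd : x + a ≠ 0) (hsub : x - a ≠ 0) (n : ℕ) :
    iteratedDeriv (n + 1) (logPair a) x
      = (-1) ^ n * n ! * ((x + a) ^ (-1 - n : ℤ) + (x - a) ^ (-1 - n : ℤ)) := by
  have hlogAdd : ContDiffAt ℝ (n + 1) (fun y => log (y + a)) x :=
    (contDiffAt_log.2 hadd).comp x (contDiffAt_id.add contDiffAt_const)
  have hlogSub : ContDiffAt ℝ (n + 1) (fun y => log (y - a)) x :=
    (contDiffAt_log.2 hsub).comp x (contDiffAt_id.sub contDiffAt_const)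
  show iteratedDeriv (n + 1) (fun y => log (y + a) + log (y - a)) x = _
  rw [iteratedDeriv_fun_add hlogAdd hlogSub, iteratedDeriv_comp_add_const,
    iteratedDeriv_comp_sub_const]
  dsimp only
  rw [Real.iteratedDeriv_succ_log, Real.iteratedDeriv_succ_log]
  ring

end

noncomputable def kummerFreeEnergy : ℕ → ℝ → ℝ → ℝ
  | 0, a, y => (y + a) ^ 2 / 2 * log (y + a) + (y - a) ^ 2 / 2 * log (y - a)
      - 2 * a ^ 2 * log (2 * a) - 3 / 2 * (y ^ 2 - a ^ 2)
  | 1, a, y => -(1 / 12) * log ((y ^ 2 - a ^ 2) / a)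
  | g + 2, a, y =>
      (bernoulli (2 * (g + 2)) : ℝ) / (2 * ((g + 2 : ℕ) : ℝ) * (2 * ((g + 2 : ℕ) : ℝ) - 2))
      * ((a + y) ^ (2 - 2 * ((g + 2 : ℕ) : ℤ)) + (a - y) ^ (2 - 2 * ((g + 2 : ℕ) : ℤ))
        - (2 * a) ^ (2 - 2 * ((g + 2 : ℕ) : ℤ)))

section

variable {a x : ℝ}

theorem hasDerivAt_kummerFreeEnergy_zero {y : ℝ} (hadd : y + a ≠ 0) (hsub : y - a ≠ 0) :
    HasDerivAt (kummerFreeEnergy 0 a)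
      ((y + a) * log (y + a) + (y - a) * log (y - a) - 2 * y) y := by
  have hsq (b : ℝ) (hb : y + b ≠ 0) :
      HasDerivAt (fun y => (y + b) ^ 2 / 2 * log (y + b))
        ((y + b) * log (y + b) + (y + b) / 2) y := by
    have h := ((((hasDerivAt_id y).add_const b).pow 2).div_const 2).mul
      (((hasDerivAt_id y).add_const b).log hb)
    refine h.congr_deriv ?_
    simp only [id, Pi.pow_apply]
    field_simp
    ring
  have hsq' := hsq (-a) (by rwa [← sub_eq_add_neg])
  simp only [← sub_eq_add_neg] at hsq'
  have h := (((hsq a hadd).add hsq').sub_const (2 * a ^ 2 * log (2 * a))).sub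
    (((hasDerivAt_pow 2 y).sub_const (a ^ 2)).const_mul (3 / 2))
  refine h.congr_deriv ?_
  ring

theorem hasDerivAt_mul_log_add_mul_log_sub {y : ℝ} (hadd : y + a ≠ 0) (hsub : y - a ≠ 0) :
    HasDerivAt (fun y => (y + a) * log (y + a) + (y - a) * log (y - a) - 2 * y)
      (logPair a y) y := by
  have h := (((hasDerivAt_mul_log hadd).comp_add_const y a).add
    ((hasDerivAt_mul_log hsub).comp_sub_const y a)).sub ((hasDerivAt_id y).const_mul 2)
  refine h.congr_deriv ?_
  rw [logPair]
  ring

theorem iteratedDeriv_add_two_kummerFreeEnergy_zero (hadd : x + a ≠ 0) (hsub : x - a ≠ 0)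
    (n : ℕ) :
    iteratedDeriv (n + 2) (kummerFreeEnergy 0 a) x = iteratedDeriv n (logPair a) x := by
  have hne := eventually_add_ne_zero_and_sub_ne_zero hadd hsub
  rw [iteratedDeriv_succ_eq_of_eventually_hasDerivAt
      (hne.mono fun y hy => hasDerivAt_kummerFreeEnergy_zero hy.1 hy.2),
    iteratedDeriv_succ_eq_of_eventually_hasDerivAt
      (hne.mono fun y hy => hasDerivAt_mul_log_add_mul_log_sub hy.1 hy.2)]

theorem kummerFreeEnergy_one_eventuallyEq (ha : a ≠ 0) (hadd : x + a ≠ 0) (hsub : x - a ≠ 0) :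
    kummerFreeEnergy 1 a =ᶠ[𝓝 x] fun y => log a / 12 + -(1 / 12) * logPair a y := by
  filter_upwards [eventually_add_ne_zero_and_sub_ne_zero hadd hsub] with y ⟨hyadd, hysub⟩
  rw [kummerFreeEnergy, logPair, show y ^ 2 - a ^ 2 = (y + a) * (y - a) by ring,
    log_div (mul_ne_zero hyadd hysub) ha, log_mul hyadd hysub]
  ring

theorem iteratedDeriv_succ_kummerFreeEnergy_one (ha : a ≠ 0) (hadd : x + a ≠ 0)
    (hsub : x - a ≠ 0) (n : ℕ) :
    iteratedDeriv (n + 1) (kummerFreeEnergy 1 a) x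
      = -(1 / 12) * iteratedDeriv (n + 1) (logPair a) x := by
  rw [(kummerFreeEnergy_one_eventuallyEq ha hadd hsub).iteratedDeriv_eq,
    iteratedDeriv_const_add n.succ_pos, iteratedDeriv_const_mul_field]

theorem kummerFreeEnergy_add_two_eventuallyEq (hadd : x + a ≠ 0) (hsub : x - a ≠ 0) (g : ℕ) :
    kummerFreeEnergy (g + 2) a =ᶠ[𝓝 x] fun y =>
      -((bernoulli (2 * (g + 2)) : ℝ) / (2 * ((g + 2 : ℕ) : ℝ) * (2 * ((g + 2 : ℕ) : ℝ) - 2))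
          * (2 * a) ^ (2 - 2 * ((g + 2 : ℕ) : ℤ)))
        + -((bernoulli (2 * (g + 2)) : ℝ) * (2 * ((g + 2 : ℕ) : ℝ) - 1) / (2 * (g + 2))!)
          * iteratedDeriv (2 * g + 2) (logPair a) y := by
  filter_upwards [eventually_add_ne_zero_and_sub_ne_zero hadd hsub] with y ⟨hyadd, hysub⟩
  have hexp : 2 - 2 * ((g + 2 : ℕ) : ℤ) = -1 - ((2 * g + 1 : ℕ) : ℤ) := by push_cast; ring
  have heven : Even (-1 - ((2 * g + 1 : ℕ) : ℤ)) := ⟨-(g : ℤ) - 1, by push_cast; ring⟩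
  have hfact :
      ((2 * (g + 2))! : ℝ) = (2 * g + 4) * (2 * g + 3) * (2 * g + 2) * (2 * g + 1)! := by
    rw [show 2 * (g + 2) = 2 * g + 1 + 1 + 1 + 1 by ring]
    simp only [Nat.factorial_succ]
    push_cast
    ring
  rw [kummerFreeEnergy, iteratedDeriv_succ_logPair hyadd hysub, hexp, add_comm a y,
    show a - y = -(y - a) by ring, heven.neg_zpow, (odd_two_mul_add_one g).neg_one_pow, hfact]
  push_cast
  rw [show 2 * ((g : ℝ) + 2) - 2 = 2 * g + 2 by ring,
    show 2 * ((g : ℝ) + 2) - 1 = 2 * g + 3 by ring]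
  field_simp
  ring

theorem iteratedDeriv_succ_kummerFreeEnergy_add_two (hadd : x + a ≠ 0) (hsub : x - a ≠ 0)
    (g n : ℕ) :
    iteratedDeriv (n + 1) (kummerFreeEnergy (g + 2) a) x
      = -((bernoulli (2 * (g + 2)) : ℝ) * (2 * ((g + 2 : ℕ) : ℝ) - 1) / (2 * (g + 2))!)
          * iteratedDeriv (n + 1 + (2 * g + 2)) (logPair a) x := by
  rw [(kummerFreeEnergy_add_two_eventuallyEq hadd hsub g).iteratedDeriv_eq,
    iteratedDeriv_const_add n.succ_pos, iteratedDeriv_const_mul_field,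
    iteratedDeriv_iteratedDeriv]

theorem iteratedDeriv_kummerFreeEnergy (ha : a ≠ 0) (hadd : x + a ≠ 0) (hsub : x - a ≠ 0)
    (g k : ℕ) :
    iteratedDeriv (2 * k + 2) (kummerFreeEnergy g a) x
      = -((bernoulli (2 * g) : ℝ) * (2 * g - 1) / (2 * g)!)
          * iteratedDeriv (2 * (g + k)) (logPair a) x := by
  match g with
  | 0 => simp [iteratedDeriv_add_two_kummerFreeEnergy_zero hadd hsub]
  | 1 =>
    rw [iteratedDeriv_succ_kummerFreeEnergy_one ha hadd hsub, bernoulli_two,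
      show 2 * (1 + k) = 2 * k + 2 by ring]
    norm_num
  | g + 2 =>
    rw [iteratedDeriv_succ_kummerFreeEnergy_add_two hadd hsub,
      show 2 * k + 1 + 1 + (2 * g + 2) = 2 * (g + 2 + k) by ring]

noncomputable def secondDifferenceCoeff (F : ℕ → ℝ → ℝ) (n : ℕ) (x : ℝ) : ℝ :=
  ∑ k ∈ Icc 1 n, 2 / ((2 * k)! : ℝ) * iteratedDeriv (2 * k) (F (n - k)) x

theorem secondDifferenceCoeff_congr {F G : ℕ → ℝ → ℝ} (h : ∀ g, F g =ᶠ[𝓝 x] G g) (n : ℕ) :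
    secondDifferenceCoeff F n x = secondDifferenceCoeff G n x :=
  sum_congr rfl fun k _ => by rw [(h (n - k)).iteratedDeriv_eq]

theorem secondDifferenceCoeff_kummerFreeEnergy (ha : a ≠ 0) (hadd : x + a ≠ 0) (hsub : x - a ≠ 0)
    {n : ℕ} (hn : 1 ≤ n) :
    secondDifferenceCoeff (kummerFreeEnergy · a) n x = if n = 1 then logPair a x else 0 := by
  obtain ⟨m, rfl⟩ : ∃ m, n = m + 1 := ⟨n - 1, by omega⟩
  have hterm (g : ℕ) (hg : g ∈ range (m + 1)) :
      2 / ((2 * (m + 1 - g))! : ℝ)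
          * iteratedDeriv (2 * (m + 1 - g)) (kummerFreeEnergy (m + 1 - (m + 1 - g)) a) x
        = -(2 / (2 * (m + 1))! * iteratedDeriv (2 * m) (logPair a) x)
          * ((2 * g - 1 : ℚ) * (2 * (m + 1)).choose (2 * g) * bernoulli (2 * g) : ℚ) := by
    rw [mem_range] at hg
    obtain ⟨k, hk⟩ : ∃ k, m - g = k := ⟨_, rfl⟩
    have hchoose := Nat.add_choose_mul_factorial_mul_factorial (2 * k + 2) (2 * g)
    rw [show 2 * k + 2 + 2 * g = 2 * (m + 1) by omega] at hchoose
    have hchoose_ne : ((2 * (m + 1)).choose (2 * g) : ℝ) ≠ 0 :=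
      Nat.cast_ne_zero.2 (Nat.choose_pos (by omega)).ne'
    rw [show m + 1 - (m + 1 - g) = g by omega, show 2 * (m + 1 - g) = 2 * k + 2 by omega,
      iteratedDeriv_kummerFreeEnergy ha hadd hsub, show g + k = m by omega, ← hchoose]
    push_cast
    field_simp
  have hbern := congrArg (Rat.cast : ℚ → ℝ)
    (sum_range_two_mul_sub_one_mul_choose_mul_bernoulli (m + 1))
  rw [Rat.cast_sum] at hbern
  rw [secondDifferenceCoeff, sum_Icc_one_eq_sum_range_sub, sum_congr rfl hterm, ← mul_sum,
    hbern]
  split_ifs with hm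
  · obtain rfl : m = 0 := by omega
    simp
  · simp

end

/-- (Kummer curve, direction λ∞) The free energy of the Kummer spectral curve
satisfies `F(λ₀, λ∞+ℏ) − 2F(λ₀,λ∞) + F(λ₀, λ∞−ℏ) = log((λ∞+λ₀)(λ∞−λ₀))`
order by order in `ℏ`. -/
theorem stmt14 (F : ℕ → ℝ → ℝ → ℝ)
    (hF0 : ∀ l0 li : ℝ, 0 < l0 → l0 < li →
      F 0 l0 li = (li + l0) ^ 2 / 2 * Real.log (li + l0)
        + (li - l0) ^ 2 / 2 * Real.log (li - l0)
        - 2 * l0 ^ 2 * Real.log (2 * l0) - 3 / 2 * (li ^ 2 - l0 ^ 2))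
    (hF1 : ∀ l0 li : ℝ, 0 < l0 → l0 < li →
      F 1 l0 li = -(1 / 12) * Real.log ((li ^ 2 - l0 ^ 2) / l0))
    (hFg : ∀ g : ℕ, 2 ≤ g → ∀ l0 li : ℝ, 0 < l0 → l0 < li →
      F g l0 li = (bernoulli (2 * g) : ℝ) / (2 * (g : ℝ) * (2 * (g : ℝ) - 2))
        * ((l0 + li) ^ (2 - 2 * (g : ℤ)) + (l0 - li) ^ (2 - 2 * (g : ℤ))
            - (2 * l0) ^ (2 - 2 * (g : ℤ))))
    (n : ℕ) (hn : 1 ≤ n) (l0 li : ℝ) (h0 : 0 < l0) (h1 : l0 < li) :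
    ∑ k ∈ Finset.Icc 1 n,
        2 / (Nat.factorial (2 * k) : ℝ) * iteratedDeriv (2 * k) (F (n - k) l0) li
      = if n = 1 then Real.log ((li + l0) * (li - l0)) else 0 := by
  have hF (g : ℕ) : F g l0 =ᶠ[𝓝 li] kummerFreeEnergy g l0 := by
    filter_upwards [Ioi_mem_nhds h1] with y hy
    match g with
    | 0 => exact hF0 l0 y h0 hy
    | 1 => exact hF1 l0 y h0 hy
    | g + 2 => exact hFg (g + 2) (by omega) l0 y h0 hy
  have hadd : li + l0 ≠ 0 := by linarith
  have hsub : li - l0 ≠ 0 := by linarith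
  change secondDifferenceCoeff (F · l0) n li = _
  rw [secondDifferenceCoeff_congr hF,
    secondDifferenceCoeff_kummerFreeEnergy h0.ne' hadd hsub hn, logPair, log_mul hadd hsub]
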